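/- Let n, k, t be positive integers, let α ≥ 0 with 3α·√(k·t) ≤ 0.19, and let F ∈ ℂ^{n×n} be a unitary matrix all of whose entries satisfy |F_{ij}| ≤ α. Let x̂ ∈ ℂ^n, let x̂_h be a best k-sparse approximation of x̂ and x̂_t = x̂ − x̂_h, let e ∈ ℂ^n be t-sparse, and let y = F^{-1}x̂ + e. Let (x̂^{[i]}, e^{[i]})_{i≥1} be an IHT sequence for (y, F, k, t). Then for every positive integer T, √(‖x̂^{[T+1]} − x̂_h‖₂² + ‖e^{[T+1]} − e‖₂²) ≤ 2^{-T}·√(‖x̂_h‖₂² + ‖e‖₂²) + 4‖x̂_t‖₂. -/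

import Mathlib

/-- The Euclidean (ℓ2) norm of a complex vector. -/
noncomputable def l2norm {n : ℕ} (x : Fin n → ℂ) : ℝ :=
  Real.sqrt (∑ i, ‖x i‖ ^ 2)

/-- A vector is `k`-sparse if at most `k` of its entries are nonzero. -/
def Sparse {n : ℕ} (k : ℕ) (x : Fin n → ℂ) : Prop :=
  (Finset.univ.filter (fun i => x i ≠ 0)).card ≤ k

/-- `w` is a best `k`-sparse approximation of `u`. -/
def BestSparseApprox {n : ℕ} (k : ℕ) (u w : Fin n → ℂ) : Prop :=
  Sparse k w ∧ ∀ w', Sparse k w' → l2norm (u - w) ≤ l2norm (u - w')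

/-- `(xh, eh)` is an IHT sequence for `(y, F, k, t)`: starting from the all-zeros vectors,
each iterate projects onto best `k`-sparse (resp. `t`-sparse) approximations.
Here `F⁻¹ = Fᴴ` since `F` is unitary. -/
def IHTSeq {n : ℕ} (y : Fin n → ℂ) (F : Matrix (Fin n) (Fin n) ℂ) (k t : ℕ)
    (xh eh : ℕ → Fin n → ℂ) : Prop :=
  xh 1 = 0 ∧ eh 1 = 0 ∧
    ∀ i, 1 ≤ i →
      BestSparseApprox k (F.mulVec (y - eh i)) (xh (i + 1)) ∧
      BestSparseApprox t (y - F.conjTranspose.mulVec (xh i)) (eh (i + 1))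

/-
Write `A i = ‖x̂^{[i]} - x̂_h‖`, `B i = ‖e^{[i]} - e‖`, `τ = ‖x̂_t‖` and `μ = α √(k t)`.
As `F (y - e^{[i]}) - x̂_h = x̂_t - F (e^{[i]} - e)` and `x̂^{[i+1]}` is at least as close to
`F (y - e^{[i]})` as the `k`-sparse `x̂_h`, the vector `d = x̂^{[i+1]} - x̂_h` satisfies
`‖d‖² ≤ 2 re ⟪d, x̂_t⟫ - 2 re ⟪d, F (e^{[i]} - e)⟫`. On sparse vectors the entry bound gives
`|⟪u, F v⟫| ≤ α ‖u‖₁ ‖v‖₁ ≤ α √(|supp u| |supp v|) ‖u‖ ‖v‖`, whence `A (i+1) ≤ 4 μ B i + 2 τ`;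
symmetrically `B (i+1) ≤ 4 μ A i + 2 τ`. So `√(A² + B²)` contracts by the factor `4 μ ≤ 1/2`
up to the additive `2 √2 τ`, and `16 μ + 2 √2 ≤ 4` keeps the accumulated error below `4 τ`.
-/

open Finset Matrix
open scoped InnerProductSpace

section InnerProductSpace

variable {𝕜 E : Type*} [RCLike 𝕜] [NormedAddCommGroup E] [InnerProductSpace 𝕜 E]

theorem norm_sub_le_of_norm_sub_le_norm_sub {u w s a b : E} {c : ℝ} (hc : 0 ≤ c)
    (hbest : ‖u - w‖ ≤ ‖u - s‖) (hus : u - s = a - b) (hb : ‖⟪w - s, b⟫_𝕜‖ ≤ c * ‖w - s‖) :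
    ‖w - s‖ ≤ 2 * ‖a‖ + 2 * c := by
  -- expand `‖(u - s) - (w - s)‖ ^ 2 ≤ ‖u - s‖ ^ 2`
  have hsq : ‖w - s‖ ^ 2 ≤ 2 * RCLike.re ⟪w - s, u - s⟫_𝕜 := by
    have hexp := norm_sub_sq (𝕜 := 𝕜) (u - s) (w - s)
    rw [sub_sub_sub_cancel_right, inner_re_symm] at hexp
    nlinarith [pow_le_pow_left₀ (norm_nonneg _) hbest 2]
  have ha : RCLike.re ⟪w - s, a⟫_𝕜 ≤ ‖w - s‖ * ‖a‖ := re_inner_le_norm _ _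
  have hb' : -RCLike.re ⟪w - s, b⟫_𝕜 ≤ c * ‖w - s‖ :=
    (neg_le_abs _).trans ((RCLike.abs_re_le_norm _).trans hb)
  rw [hus, inner_sub_right, map_sub] at hsq
  rcases (norm_nonneg (w - s)).eq_or_lt with h0 | hpos
  · rw [← h0]; positivity
  · nlinarith

end InnerProductSpace

theorem sqrt_sq_add_sq_le {a b a' b' ρ c : ℝ} (ha' : 0 ≤ a') (hb' : 0 ≤ b') (hρ : 0 ≤ ρ)
    (hc : 0 ≤ c) (ha : a' ≤ ρ * b + c) (hb : b' ≤ ρ * a + c) :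
    √(a' ^ 2 + b' ^ 2) ≤ ρ * √(a ^ 2 + b ^ 2) + √2 * c := by
  have hab : a + b ≤ √2 * √(a ^ 2 + b ^ 2) := by
    rw [← Real.sqrt_mul zero_le_two]
    exact (le_abs_self _).trans (Real.abs_le_sqrt (by nlinarith [sq_nonneg (a - b)]))
  have h2 : √2 ^ 2 = 2 := Real.sq_sqrt zero_le_two
  have hS2 : √(a ^ 2 + b ^ 2) ^ 2 = a ^ 2 + b ^ 2 := Real.sq_sqrt (by positivity)
  refine Real.sqrt_le_iff.mpr ⟨by positivity, ?_⟩
  calc a' ^ 2 + b' ^ 2 ≤ (ρ * b + c) ^ 2 + (ρ * a + c) ^ 2 := by gcongr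
    _ = ρ ^ 2 * (a ^ 2 + b ^ 2) + 2 * (ρ * c) * (a + b) + 2 * c ^ 2 := by ring
    _ ≤ ρ ^ 2 * √(a ^ 2 + b ^ 2) ^ 2 + 2 * (ρ * c) * (√2 * √(a ^ 2 + b ^ 2)) + √2 ^ 2 * c ^ 2 := by
      rw [hS2, h2]; gcongr
    _ = (ρ * √(a ^ 2 + b ^ 2) + √2 * c) ^ 2 := by ring

theorem le_inv_two_pow_mul_add {s : ℕ → ℝ} {ρ c D : ℝ} (hρ : 0 ≤ ρ) (hρ2 : ρ ≤ 1 / 2)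
    (hs0 : 0 ≤ s 0) (hD0 : 0 ≤ D) (hD : ρ * D + c ≤ D) (hs : ∀ m, s (m + 1) ≤ ρ * s m + c) :
    ∀ m, s m ≤ (2 ^ m)⁻¹ * s 0 + D
  | 0 => by simpa using hD0
  | m + 1 => by
    have ih := le_inv_two_pow_mul_add hρ hρ2 hs0 hD0 hD hs m
    have hpow : 0 ≤ (2 ^ m : ℝ)⁻¹ * s 0 := by positivity
    calc s (m + 1) ≤ ρ * ((2 ^ m)⁻¹ * s 0 + D) + c := (hs m).trans (by gcongr)
      _ ≤ 1 / 2 * ((2 ^ m)⁻¹ * s 0) + (ρ * D + c) := by nlinarith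
      _ ≤ (2 ^ (m + 1))⁻¹ * s 0 + D := by rw [pow_succ, mul_inv]; linarith

theorem l2norm_eq_norm_toLp {n : ℕ} (x : Fin n → ℂ) : l2norm x = ‖WithLp.toLp 2 x‖ := by
  rw [EuclideanSpace.norm_eq]
  rfl

theorem l2norm_nonneg {n : ℕ} (x : Fin n → ℂ) : 0 ≤ l2norm x :=
  Real.sqrt_nonneg _

theorem l2norm_neg {n : ℕ} (x : Fin n → ℂ) : l2norm (-x) = l2norm x := by
  simp [l2norm]

theorem l2norm_mulVec_of_conjTranspose_mul_self {m n : ℕ} {M : Matrix (Fin m) (Fin n) ℂ}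
    (hM : Mᴴ * M = 1) (x : Fin n → ℂ) : l2norm (M *ᵥ x) = l2norm x := by
  have hinner : ⟪WithLp.toLp 2 (M *ᵥ x), WithLp.toLp 2 (M *ᵥ x)⟫_ℂ =
      ⟪WithLp.toLp 2 x, WithLp.toLp 2 x⟫_ℂ := by
    rw [EuclideanSpace.inner_toLp_toLp, EuclideanSpace.inner_toLp_toLp, star_mulVec,
      dotProduct_comm, dotProduct_mulVec, vecMul_vecMul, hM, vecMul_one, dotProduct_comm]
  rw [l2norm_eq_norm_toLp, l2norm_eq_norm_toLp, norm_eq_sqrt_re_inner (𝕜 := ℂ), hinner,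
    ← norm_eq_sqrt_re_inner]

namespace Sparse

variable {n : ℕ}

theorem zero (k : ℕ) : Sparse k (0 : Fin n → ℂ) := by
  simp [Sparse]

theorem sub {k₁ k₂ : ℕ} {a b : Fin n → ℂ} (ha : Sparse k₁ a) (hb : Sparse k₂ b) :
    Sparse (k₁ + k₂) (a - b) := by
  classical
  refine (card_le_card fun i hi => ?_).trans ((card_union_le _ _).trans (add_le_add ha hb))
  simp only [mem_filter, mem_union, mem_univ, true_and, Pi.sub_apply] at hi ⊢
  by_contra! h
  simp [h.1, h.2] at hi

theorem sum_norm_le {K : ℕ} {x : Fin n → ℂ} (hx : Sparse K x) :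
    ∑ i, ‖x i‖ ≤ √K * l2norm x := by
  classical
  have hsq : (∑ i, ‖x i‖) ^ 2 ≤ K * ∑ i, ‖x i‖ ^ 2 := by
    rw [← sum_filter_of_ne (p := fun i => x i ≠ 0) fun i _ h => norm_ne_zero_iff.mp h]
    calc (∑ i with x i ≠ 0, ‖x i‖) ^ 2 ≤ #{i | x i ≠ 0} * ∑ i with x i ≠ 0, ‖x i‖ ^ 2 :=
          sq_sum_le_card_mul_sum_sq
      _ ≤ K * ∑ i, ‖x i‖ ^ 2 := by
          gcongr
          · exact_mod_cast hx
          · exact filter_subset _ _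
  rw [l2norm, ← Real.sqrt_mul K.cast_nonneg]
  exact Real.le_sqrt_of_sq_le hsq

end Sparse

theorem norm_inner_mulVec_le {m n : Type*} [Fintype m] [Fintype n] {α : ℝ}
    {M : Matrix m n ℂ} (hM : ∀ i j, ‖M i j‖ ≤ α) (u : m → ℂ) (v : n → ℂ) :
    ‖⟪WithLp.toLp 2 u, WithLp.toLp 2 (M *ᵥ v)⟫_ℂ‖ ≤ α * (∑ i, ‖u i‖) * ∑ j, ‖v j‖ := by
  have hrow : ∀ i, ‖(M *ᵥ v) i‖ ≤ α * ∑ j, ‖v j‖ := fun i => by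
    rw [mul_sum]
    refine (norm_sum_le _ _).trans (sum_le_sum fun j _ => ?_)
    rw [norm_mul]
    gcongr
    exact hM i j
  rw [EuclideanSpace.inner_toLp_toLp, mul_right_comm, mul_sum]
  refine (norm_sum_le _ _).trans (sum_le_sum fun i _ => ?_)
  rw [norm_mul, Pi.star_apply, norm_star]
  gcongr
  exact hrow i

theorem BestSparseApprox.l2norm_sub_le {n m k K : ℕ} {α : ℝ} (hα : 0 ≤ α)
    {M : Matrix (Fin n) (Fin m) ℂ} (hM : ∀ i j, ‖M i j‖ ≤ α) {u w s a : Fin n → ℂ}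
    {v : Fin m → ℂ} (hw : BestSparseApprox k u w) (hs : Sparse k s) (hv : Sparse K v)
    (hu : u - s = a - M *ᵥ v) :
    l2norm (w - s) ≤ 2 * (α * (√↑(k + k) * √K)) * l2norm v + 2 * l2norm a := by
  have hb : ‖⟪WithLp.toLp 2 w - WithLp.toLp 2 s, WithLp.toLp 2 (M *ᵥ v)⟫_ℂ‖ ≤
      α * (√↑(k + k) * √K) * l2norm v * l2norm (w - s) := by
    rw [← WithLp.toLp_sub]
    calc _ ≤ α * (∑ i, ‖(w - s) i‖) * ∑ j, ‖v j‖ := norm_inner_mulVec_le hM _ _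
      _ ≤ α * (√↑(k + k) * l2norm (w - s)) * (√K * l2norm v) := by
          gcongr
          exacts [mul_nonneg hα (mul_nonneg (Real.sqrt_nonneg _) (l2norm_nonneg _)),
            (hw.1.sub hs).sum_norm_le, hv.sum_norm_le]
      _ = _ := by ring
  have hbest := hw.2 s hs
  simp only [l2norm_eq_norm_toLp, WithLp.toLp_sub] at hbest hb ⊢
  linarith [norm_sub_le_of_norm_sub_le_norm_sub (by positivity) hbest
    (by rw [← WithLp.toLp_sub, hu, WithLp.toLp_sub]) hb]

theorem IHTSeq.sparse {n k t : ℕ} {y : Fin n → ℂ} {F : Matrix (Fin n) (Fin n) ℂ}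
    {xh eh : ℕ → Fin n → ℂ} (h : IHTSeq y F k t xh eh) {i : ℕ} (hi : 1 ≤ i) :
    Sparse k (xh i) ∧ Sparse t (eh i) := by
  obtain ⟨hx1, he1, hstep⟩ := h
  obtain _ | _ | i := i
  · omega
  · exact ⟨hx1 ▸ Sparse.zero k, he1 ▸ Sparse.zero t⟩
  · exact ⟨(hstep (i + 1) (by omega)).1.1, (hstep (i + 1) (by omega)).2.1⟩

theorem sqrt_add_self_mul_sqrt_add_self (k t : ℕ) :
    √↑(k + k) * √↑(t + t) = 2 * √(k * t) := by
  rw [← Real.sqrt_mul (by positivity),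
    show ((k + k : ℕ) : ℝ) * (t + t : ℕ) = 2 ^ 2 * (k * t) by push_cast; ring,
    Real.sqrt_mul (by positivity), Real.sqrt_sq zero_le_two]

namespace IHTSeq

variable {n k t : ℕ} {α : ℝ} {F : Matrix (Fin n) (Fin n) ℂ} {xhat xhatH xhatT e y : Fin n → ℂ}
  {xh eh : ℕ → Fin n → ℂ}

theorem l2norm_fst_succ_sub_le (hIHT : IHTSeq y F k t xh eh) (hα : 0 ≤ α)
    (hF : ∀ i j, ‖F i j‖ ≤ α) (hFFh : F * Fᴴ = 1) (hH : Sparse k xhatH)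
    (hT : xhatT = xhat - xhatH) (he : Sparse t e) (hy : y = Fᴴ *ᵥ xhat + e) {i : ℕ}
    (hi : 1 ≤ i) :
    l2norm (xh (i + 1) - xhatH) ≤
      2 * (α * (√↑(k + k) * √↑(t + t))) * l2norm (eh i - e) + 2 * l2norm xhatT := by
  refine (hIHT.2.2 i hi).1.l2norm_sub_le hα hF hH ((hIHT.sparse hi).2.sub he) ?_
  rw [hy, hT]
  simp only [mulVec_sub, mulVec_add, mulVec_mulVec, hFFh, one_mulVec]
  abel

/-- The `e`-step is the `x̂`-step for `Fᴴ`, whose entries obey the same bound and which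
preserves `l2norm`. -/
theorem l2norm_snd_succ_sub_le (hIHT : IHTSeq y F k t xh eh) (hα : 0 ≤ α)
    (hF : ∀ i j, ‖F i j‖ ≤ α) (hFFh : F * Fᴴ = 1) (hH : Sparse k xhatH)
    (hT : xhatT = xhat - xhatH) (he : Sparse t e) (hy : y = Fᴴ *ᵥ xhat + e) {i : ℕ}
    (hi : 1 ≤ i) :
    l2norm (eh (i + 1) - e) ≤
      2 * (α * (√↑(k + k) * √↑(t + t))) * l2norm (xh i - xhatH) + 2 * l2norm xhatT := by
  rw [mul_comm (√_), ← l2norm_mulVec_of_conjTranspose_mul_self (M := Fᴴ)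
    (by rw [conjTranspose_conjTranspose, hFFh]) xhatT]
  refine (hIHT.2.2 i hi).2.l2norm_sub_le (M := Fᴴ) hα
    (fun i j => (norm_star _).trans_le (hF j i)) he ((hIHT.sparse hi).1.sub hH) ?_
  rw [hy, hT]
  simp only [mulVec_sub]
  abel

end IHTSeq

theorem iht_weak_l2_guarantee_general
    (n k t : ℕ)
    (α : ℝ) (hα : 0 ≤ α) (hαkt : 3 * α * Real.sqrt (k * t) ≤ 0.19)
    (F : Matrix (Fin n) (Fin n) ℂ)
    (hFunit : F * F.conjTranspose = 1 ∧ F.conjTranspose * F = 1)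
    (hF : ∀ i j, ‖F i j‖ ≤ α)
    (xhat : Fin n → ℂ)
    (xhatH : Fin n → ℂ) (hH : BestSparseApprox k xhat xhatH)
    (xhatT : Fin n → ℂ) (hT : xhatT = xhat - xhatH)
    (e : Fin n → ℂ) (he : Sparse t e)
    (y : Fin n → ℂ) (hy : y = F.conjTranspose.mulVec xhat + e)
    (xhSeq ehSeq : ℕ → Fin n → ℂ) (hIHT : IHTSeq y F k t xhSeq ehSeq) :
    ∀ T : ℕ, 1 ≤ T →
      Real.sqrt (l2norm (xhSeq (T + 1) - xhatH) ^ 2 + l2norm (ehSeq (T + 1) - e) ^ 2) ≤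
        (2 : ℝ) ^ (-(T : ℤ)) * Real.sqrt (l2norm xhatH ^ 2 + l2norm e ^ 2) +
          4 * l2norm xhatT := by
  intro T _
  set μ := α * √(k * t)
  have h4μ : 2 * (α * (√↑(k + k) * √↑(t + t))) = 4 * μ := by
    rw [sqrt_add_self_mul_sqrt_add_self]; ring
  have hx := fun i (hi : 1 ≤ i) => h4μ ▸
    hIHT.l2norm_fst_succ_sub_le hα hF hFunit.1 hH.1 hT he hy hi
  have he' := fun i (hi : 1 ≤ i) => h4μ ▸
    hIHT.l2norm_snd_succ_sub_le hα hF hFunit.1 hH.1 hT he hy hi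
  have hτ := l2norm_nonneg xhatT
  have hρ : 0 ≤ 4 * μ := by positivity
  have hD : 4 * μ * (4 * l2norm xhatT) + √2 * (2 * l2norm xhatT) ≤ 4 * l2norm xhatT := by
    have hsqrt2 : √2 < 1.42 := by
      rw [Real.sqrt_lt' (by norm_num)]
      norm_num
    nlinarith
  have hs := le_inv_two_pow_mul_add hρ (by linarith) (Real.sqrt_nonneg _) (by positivity) hD
    (s := fun m => √(l2norm (xhSeq (m + 1) - xhatH) ^ 2 + l2norm (ehSeq (m + 1) - e) ^ 2))
    (fun m => sqrt_sq_add_sq_le (l2norm_nonneg _) (l2norm_nonneg _) hρ (by positivity)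
      (hx (m + 1) (by omega)) (he' (m + 1) (by omega))) T
  simpa [hIHT.1, hIHT.2.1, _root_.zpow_neg, l2norm_neg] using hs

/-- Weak L2-L2 guarantee (equation (3) in the proof of the Main Theorem):
IHT run on `y = F⁻¹x̂ + e` recovers the head `x̂_h` of `x̂` up to geometric error
plus `4‖x̂_t‖₂`, where `x̂_t = x̂ - x̂_h` is the tail. -/
theorem iht_weak_l2_guarantee
    (n k t : ℕ) (hn : 0 < n) (hk : 0 < k) (ht : 0 < t)
    (α : ℝ) (hα : 0 ≤ α) (hαkt : 3 * α * Real.sqrt (k * t) ≤ 0.19)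
    (F : Matrix (Fin n) (Fin n) ℂ)
    (hFunit : F * F.conjTranspose = 1 ∧ F.conjTranspose * F = 1)
    (hF : ∀ i j, ‖F i j‖ ≤ α)
    (xhat : Fin n → ℂ)
    (xhatH : Fin n → ℂ) (hH : BestSparseApprox k xhat xhatH)
    (xhatT : Fin n → ℂ) (hT : xhatT = xhat - xhatH)
    (e : Fin n → ℂ) (he : Sparse t e)
    (y : Fin n → ℂ) (hy : y = F.conjTranspose.mulVec xhat + e)
    (xhSeq ehSeq : ℕ → Fin n → ℂ) (hIHT : IHTSeq y F k t xhSeq ehSeq) :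
    ∀ T : ℕ, 1 ≤ T →
      Real.sqrt (l2norm (xhSeq (T + 1) - xhatH) ^ 2 + l2norm (ehSeq (T + 1) - e) ^ 2) ≤
        (2 : ℝ) ^ (-(T : ℤ)) * Real.sqrt (l2norm xhatH ^ 2 + l2norm e ^ 2) +
          4 * l2norm xhatT :=
  iht_weak_l2_guarantee_general n k t α hα hαkt F hFunit hF xhat xhatH hH xhatT hT e he y hy xhSeq
    ehSeq hIHT
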